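/- Iteration closure estimate (far-field case): let 0 < ρ ≤ 1/16, δ > 0 with ρ^δ ≥ 2/3, and let x ∈ ℝ² with |x| ≥ 1/(2ρ). Then ρ^{−δ}(1 − ρ^δ + 2(ρ|x| + 1/2)^{2δ}) ≤ 2|x|^{2δ}. -/
import Mathlib

set_option maxHeartbeats 1000000


/-- Iteration closure estimate (far-field case). -/
theorem stmt_11 (ρ δ : ℝ) (hρ0 : 0 < ρ) (hρ : ρ ≤ 1/16) (hδ : 0 < δ)
    (hρδ : (2:ℝ)/3 ≤ ρ ^ δ) (x : EuclideanSpace ℝ (Fin 2))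
    (hx : 1 / (2 * ρ) ≤ ‖x‖) :
    ρ ^ (-δ) * (1 - ρ ^ δ + 2 * (ρ * ‖x‖ + 1/2) ^ (2 * δ)) ≤ 2 * ‖x‖ ^ (2 * δ) := by
  set r := ‖x‖ with hrdef
  have h2ρ : (0:ℝ) < 2 * ρ := by linarith
  have hr0 : 0 < r := lt_of_lt_of_le (by positivity) hx
  have hρr : (1:ℝ)/2 ≤ ρ * r := by
    rw [div_le_iff₀ h2ρ] at hx
    nlinarith
  set p := ρ ^ (δ/2) with hpdef
  set q := (4:ℝ) ^ δ with hqdef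
  have hp0 : 0 < p := Real.rpow_pos_of_pos hρ0 _
  have hp1 : p ≤ 1 := Real.rpow_le_one hρ0.le (by linarith) (by positivity)
  have hq1 : 1 ≤ q := Real.one_le_rpow (by norm_num) hδ.le
  have hqp : q * p ≤ 1 := by
    have h1 : q * p = (4 * ρ ^ (1/2:ℝ)) ^ δ := by
      rw [Real.mul_rpow (by norm_num) (by positivity), hqdef, hpdef,
        ← Real.rpow_mul hρ0.le]
      ring_nf
    rw [h1]
    have h2 : ρ ^ (1/2:ℝ) ≤ 1/4 := by
      have : ρ ^ (1/2:ℝ) ≤ (1/16:ℝ) ^ (1/2:ℝ) :=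
        Real.rpow_le_rpow hρ0.le hρ (by norm_num)
      have h3 : ((1:ℝ)/16) ^ (1/2:ℝ) = 1/4 := by
        rw [show (1:ℝ)/16 = (1/4:ℝ)^(2:ℕ) by norm_num, ← Real.rpow_natCast (1/4:ℝ) 2,
          ← Real.rpow_mul (by norm_num)]
        norm_num
      linarith
    calc (4 * ρ ^ (1/2:ℝ)) ^ δ ≤ (1:ℝ) ^ δ :=
          Real.rpow_le_rpow (by positivity) (by linarith) hδ.le
      _ = 1 := Real.one_rpow δ
  have hb : ρ ^ δ = p ^ 2 := by
    rw [hpdef, ← Real.rpow_natCast (ρ ^ (δ/2)) 2, ← Real.rpow_mul hρ0.le]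
    norm_num
  have ha : ρ ^ (-δ) = (p ^ 2)⁻¹ := by
    rw [Real.rpow_neg hρ0.le, hb]
  have hc : (2*ρ) ^ (2*δ) = q * p ^ 4 := by
    rw [Real.mul_rpow (by norm_num) hρ0.le, hqdef, hpdef]
    congr 1
    · rw [show (4:ℝ) = (2:ℝ)^(2:ℕ) by norm_num, ← Real.rpow_natCast (2:ℝ) 2,
        ← Real.rpow_mul (by norm_num)]
      norm_num
    · rw [← Real.rpow_natCast (ρ ^ (δ/2)) 4, ← Real.rpow_mul hρ0.le]
      norm_num
      ring_nf
  set t := r ^ (2*δ) with htdef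
  have ht0 : 0 < t := Real.rpow_pos_of_pos hr0 _
  have hX : (ρ * r + 1/2) ^ (2*δ) ≤ q * p ^ 4 * t := by
    have h1 : ρ * r + 1/2 ≤ (2*ρ) * r := by nlinarith
    calc (ρ * r + 1/2) ^ (2*δ) ≤ ((2*ρ) * r) ^ (2*δ) :=
          Real.rpow_le_rpow (by positivity) h1 (by positivity)
      _ = (2*ρ) ^ (2*δ) * r ^ (2*δ) := Real.mul_rpow h2ρ.le hr0.le
      _ = q * p ^ 4 * t := by rw [hc]
  have hX0 : 0 ≤ (ρ * r + 1/2) ^ (2*δ) := Real.rpow_nonneg (by positivity) _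
  have ht1 : 1 ≤ q * p ^ 4 * t := by
    have h1 : (1/(2*ρ)) ^ (2*δ) ≤ t := Real.rpow_le_rpow (by positivity) hx (by positivity)
    have h2 : (1/(2*ρ)) ^ (2*δ) = (q * p ^ 4)⁻¹ := by
      rw [one_div, Real.inv_rpow h2ρ.le, hc]
    rw [h2] at h1
    have h3 : q * p ^ 4 * (q * p ^ 4)⁻¹ = 1 := mul_inv_cancel₀ (by positivity)
    nlinarith [mul_le_mul_of_nonneg_left h1 (by positivity : (0:ℝ) ≤ q * p ^ 4)]
  set X := (ρ * r + 1/2) ^ (2*δ) with hXdef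
  have hpS' : q * p ^ 4 * t ≤ p * (p ^ 2 * t) := by
    nlinarith [mul_le_mul_of_nonneg_right hqp (by positivity : (0:ℝ) ≤ p ^ 3 * t)]
  have hS0 : 0 < p ^ 2 * t := by positivity
  have hS1 : 1 ≤ p * (p ^ 2 * t) := le_trans ht1 hpS'
  have hX' : X ≤ p * (p ^ 2 * t) := le_trans hX hpS'
  have hSge : 1 ≤ p ^ 2 * t := by nlinarith
  rw [ha, hb, inv_mul_le_iff₀ (by positivity)]
  nlinarith [mul_nonneg (by linarith : (0:ℝ) ≤ 1 - p)
    (by nlinarith : (0:ℝ) ≤ 2 * (p ^ 2 * t) - 1 - p)]
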